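/- Let H be a complex Hilbert space, r ≥ 2, and let T be a bounded operator on H satisfying T^r = c_{r-1} T^{r-1} + c_{r-2} T^{r-2} + ⋯ + c_1 T + c_0 I_H for real numbers c_0, …, c_{r-1} (so T is algebraic, annihilated by P(X) = X^r − c_{r-1}X^{r-1} − ⋯ − c_0). Set a_j := c_{r-1-j} for j = 0, …, r−1. Then for every n ≥ r, T^n = Σ_{s=0}^{r-1} ρ(n−s, r; a) W_s, where W_s := Σ_{j=s}^{r-1} a_j T^{s+r-1-j} for s = 0, …, r−1. -/
import Mathlib


open Finset

/-- The combinatorial coefficient `ρ(m, r; a)`: the sum, over multi-indices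
`k = (k₀, …, k_{r-1}) ∈ ℤ₊ʳ` with `1·k₀ + 2·k₁ + ⋯ + r·k_{r-1} = m − r`, of the multinomial
coefficient `(k₀+⋯+k_{r-1})! / (k₀!⋯k_{r-1}!)` times `a₀^{k₀} ⋯ a_{r-1}^{k_{r-1}}`,
with the convention `ρ(m, r; a) = 0` for `m < r` (and in particular `ρ(r, r; a) = 1`). -/
noncomputable def rho {R : Type*} [Ring R] (r : ℕ) (A : ℕ → R) (m : ℕ) : R :=
  if m < r then 0
  else ∑ k ∈ (Fintype.piFinset fun _ : Fin r => Finset.range (m - r + 1)).filter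
      (fun k : Fin r → ℕ => ∑ j : Fin r, ((j : ℕ) + 1) * k j = m - r),
    (Nat.multinomial Finset.univ k : R) * (List.ofFn fun j : Fin r => A (j : ℕ) ^ k j).prod

open Nat

private lemma multinomial_rec {r : ℕ} (k : Fin r → ℕ) (hk : ∃ j, k j ≠ 0) :
    Nat.multinomial univ k =
      ∑ j : Fin r, if k j = 0 then 0
        else Nat.multinomial univ (Function.update k j (k j - 1)) := by
  have hP : 0 < ∏ i : Fin r, (k i) ! := prod_pos fun i _ => (k i).factorial_pos
  have hN : 1 ≤ ∑ i : Fin r, k i := by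
    obtain ⟨j, hj⟩ := hk
    have := Finset.single_le_sum (f := k) (fun i _ => Nat.zero_le _) (mem_univ j)
    omega
  refine Nat.eq_of_mul_eq_mul_left hP ?_
  rw [Nat.multinomial_spec, Finset.mul_sum]
  have step : ∀ j : Fin r,
      (∏ i : Fin r, (k i) !) * (if k j = 0 then 0
        else Nat.multinomial univ (Function.update k j (k j - 1)))
      = k j * (∑ i : Fin r, k i - 1) ! := by
    intro j
    by_cases hj : k j = 0
    · simp [hj]
    · obtain ⟨u, hu⟩ : ∃ u, k j = u + 1 := ⟨k j - 1, by omega⟩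
      rw [if_neg hj]
      have hprod : (∏ i : Fin r, (Function.update k j (k j - 1) i) !)
          = (k j - 1) ! * ∏ i ∈ univ \ {j}, (k i) ! := by
        have : ∀ i, (Function.update k j (k j - 1) i) !
            = Function.update (fun i => (k i) !) j ((k j - 1) !) i := fun i =>
          Function.apply_update (fun _ n => n !) k j (k j - 1) i
        simp_rw [this]
        exact prod_update_of_mem (mem_univ j) _ _
      have hsum : (∑ i : Fin r, Function.update k j (k j - 1) i)
          = (k j - 1) + ∑ i ∈ univ \ {j}, k i := by
        exact sum_update_of_mem (mem_univ j) _ _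
      have hspec := Nat.multinomial_spec (univ : Finset (Fin r)) (Function.update k j (k j - 1))
      rw [hprod, hsum] at hspec
      have hsplit : ∑ i : Fin r, k i = k j + ∑ i ∈ univ \ {j}, k i := by
        have := Finset.sum_eq_sum_sdiff_singleton_add (mem_univ j) k; omega
      have hkj : ∏ i : Fin r, (k i) ! = k j * ((k j - 1) ! * ∏ i ∈ univ \ {j}, (k i) !) := by
        rw [Finset.prod_eq_prod_diff_singleton_mul (mem_univ j) (fun i => (k i) !)]
        rw [hu, show u + 1 - 1 = u from rfl, Nat.factorial_succ]; ring
      calc (∏ i : Fin r, (k i) !) * Nat.multinomial univ (Function.update k j (k j - 1))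
          = k j * (((k j - 1) ! * ∏ i ∈ univ \ {j}, (k i) !) *
              Nat.multinomial univ (Function.update k j (k j - 1))) := by rw [hkj]; ring
        _ = k j * (k j - 1 + ∑ i ∈ univ \ {j}, k i) ! := by rw [hspec]
        _ = k j * (∑ i : Fin r, k i - 1) ! := by
            congr 2; omega
  simp_rw [step]
  rw [← Finset.sum_mul]
  rw [← Nat.succ_pred_eq_of_pos (show 0 < ∑ i : Fin r, k i by omega)]
  simp [Nat.factorial_succ]

private def Sd (r d : ℕ) : Finset (Fin r → ℕ) :=
  (Fintype.piFinset fun _ : Fin r => Finset.range (d + 1)).filter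
    (fun k : Fin r → ℕ => ∑ j : Fin r, ((j : ℕ) + 1) * k j = d)

private lemma mem_Sd {r d : ℕ} {k : Fin r → ℕ} :
    k ∈ Sd r d ↔ ∑ j : Fin r, ((j : ℕ) + 1) * k j = d := by
  simp only [Sd, mem_filter, Fintype.mem_piFinset, mem_range]
  refine ⟨fun h => h.2, fun h => ⟨fun i => ?_, h⟩⟩
  have h1 : ((i : ℕ) + 1) * k i ≤ d := h ▸
    Finset.single_le_sum (f := fun j : Fin r => ((j : ℕ) + 1) * k j)
      (fun _ _ => Nat.zero_le _) (mem_univ i)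
  have h2 : k i ≤ ((i : ℕ) + 1) * k i := Nat.le_mul_of_pos_left _ (Nat.succ_pos _)
  omega

private noncomputable def Fsum (r d : ℕ) (A : ℕ → ℝ) : ℝ :=
  ∑ k ∈ Sd r d, (Nat.multinomial univ k : ℝ) * ∏ j : Fin r, A (j : ℕ) ^ k j

private lemma rho_eq_Fsum {r m : ℕ} (A : ℕ → ℝ) (h : r ≤ m) :
    rho r A m = Fsum r (m - r) A := by
  rw [rho, if_neg (by omega)]
  refine Finset.sum_congr rfl fun k _ => ?_
  rw [List.prod_ofFn]

private lemma rho_of_lt {r m : ℕ} (A : ℕ → ℝ) (h : m < r) : rho r A m = 0 := by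
  rw [rho, if_pos h]

private lemma Fsum_zero {r : ℕ} (A : ℕ → ℝ) : Fsum r 0 A = 1 := by
  have hS : Sd r 0 = {fun _ => 0} := by
    ext k
    simp only [mem_Sd, mem_singleton]
    constructor
    · intro h
      funext i
      have := Finset.sum_eq_zero_iff.mp h i (mem_univ i)
      exact (Nat.mul_eq_zero.mp this).resolve_left (Nat.succ_ne_zero _)
    · rintro rfl; simp
  rw [Fsum, hS, Finset.sum_singleton]
  have := Nat.multinomial_spec (univ : Finset (Fin r)) (fun _ => 0)
  simp only [Nat.factorial_zero, Finset.prod_const_one, one_mul, Finset.sum_const_zero] at this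
  simp [this]

private lemma rho_succ {r m : ℕ} (A : ℕ → ℝ) (hr : 1 ≤ r) (hm : r ≤ m) :
    rho r A (m + 1) = ∑ j ∈ Finset.range r, A j * rho r A (m - j) := by
  have hd1 : 1 ≤ m + 1 - r := by omega
  set d := m + 1 - r with hd
  rw [rho_eq_Fsum A (by omega)]
  rw [← Fin.sum_univ_eq_sum_range (fun j => A j * rho r A (m - j)) r]
  have key : ∀ j : Fin r,
      (∑ k ∈ (Sd r d).filter (fun k => ¬ k j = 0),
        (Nat.multinomial univ (Function.update k j (k j - 1)) : ℝ) * ∏ i : Fin r, A (i : ℕ) ^ k i)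
      = A (j : ℕ) * rho r A (m - (j : ℕ)) := by
    intro j
    have hjr : (j : ℕ) < r := j.isLt
    by_cases hj : (j : ℕ) + 1 ≤ d
    · rw [rho_eq_Fsum A (show r ≤ m - (j : ℕ) by omega)]
      have hsub : m - (j : ℕ) - r = d - ((j : ℕ) + 1) := by omega
      rw [hsub, Fsum, Finset.mul_sum]
      refine Finset.sum_nbij' (fun k => Function.update k j (k j - 1))
        (fun k => Function.update k j (k j + 1)) ?_ ?_ ?_ ?_ ?_
      · intro k hk
        rw [mem_filter, mem_Sd] at hk
        obtain ⟨hk1, hk2⟩ := hk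
        rw [mem_Sd]
        obtain ⟨u, hu⟩ : ∃ u, k j = u + 1 := ⟨k j - 1, by omega⟩
        have e1 : ∀ i : Fin r, ((i : ℕ) + 1) * (Function.update k j (k j - 1)) i
            = Function.update (fun i : Fin r => ((i : ℕ) + 1) * k i) j
                (((j : ℕ) + 1) * (k j - 1)) i :=
          fun i => Function.apply_update (fun (i : Fin r) n => ((i : ℕ) + 1) * n) k j (k j - 1) i
        simp_rw [e1]
        rw [Finset.sum_update_of_mem (mem_univ j)]
        have e2 := Finset.sum_eq_sum_sdiff_singleton_add (mem_univ j)
          (fun i : Fin r => ((i : ℕ) + 1) * k i)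
        rw [hu] at e2 ⊢
        rw [show u + 1 - 1 = u from rfl]
        have e4 : ((j : ℕ) + 1) * (u + 1) = ((j : ℕ) + 1) * u + ((j : ℕ) + 1) := by ring
        omega
      · intro k hk
        rw [mem_Sd] at hk
        rw [mem_filter, mem_Sd]
        constructor
        · have e1 : ∀ i : Fin r, ((i : ℕ) + 1) * (Function.update k j (k j + 1)) i
              = Function.update (fun i : Fin r => ((i : ℕ) + 1) * k i) j
                  (((j : ℕ) + 1) * (k j + 1)) i :=
            fun i => Function.apply_update (fun (i : Fin r) n => ((i : ℕ) + 1) * n) k j (k j + 1) i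
          simp_rw [e1]
          rw [Finset.sum_update_of_mem (mem_univ j)]
          have e2 := Finset.sum_eq_sum_sdiff_singleton_add (mem_univ j)
            (fun i : Fin r => ((i : ℕ) + 1) * k i)
          have e4 : ((j : ℕ) + 1) * (k j + 1) = ((j : ℕ) + 1) * (k j) + ((j : ℕ) + 1) := by ring
          omega
        · simp [Function.update_self]
      · intro k hk
        rw [mem_filter] at hk
        have hkj : k j ≠ 0 := hk.2
        beta_reduce
        rw [Function.update_self, Function.update_idem, Nat.sub_add_cancel (by omega),
          Function.update_eq_self]
      · intro k hk
        beta_reduce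
        rw [Function.update_self, Function.update_idem, Nat.add_sub_cancel,
          Function.update_eq_self]
      · intro k hk
        rw [mem_filter] at hk
        have hkj : k j ≠ 0 := hk.2
        beta_reduce
        obtain ⟨u, hu⟩ : ∃ u, k j = u + 1 := ⟨k j - 1, by omega⟩
        have hprodA : (∏ i : Fin r, A (i : ℕ) ^ k i)
            = A (j : ℕ) * ∏ i : Fin r, A (i : ℕ) ^ (Function.update k j (k j - 1)) i := by
          have e1 : ∀ i : Fin r, A (i : ℕ) ^ (Function.update k j (k j - 1)) i
              = Function.update (fun i : Fin r => A (i : ℕ) ^ k i) j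
                  (A (j : ℕ) ^ (k j - 1)) i :=
            fun i => Function.apply_update (fun (i : Fin r) n => A (i : ℕ) ^ n) k j (k j - 1) i
          simp_rw [e1]
          rw [Finset.prod_update_of_mem (mem_univ j)]
          rw [Finset.prod_eq_prod_diff_singleton_mul (mem_univ j)
            (fun i : Fin r => A (i : ℕ) ^ k i)]
          rw [hu, show u + 1 - 1 = u from rfl, pow_succ]
          ring
        rw [hprodA]
        ring
    · rw [rho_of_lt A (show m - (j : ℕ) < r by omega), mul_zero]
      refine Finset.sum_eq_zero fun k hk => ?_
      rw [mem_filter, mem_Sd] at hk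
      exfalso
      have h1 : ((j : ℕ) + 1) * k j ≤ d := hk.1 ▸
        Finset.single_le_sum (f := fun i : Fin r => ((i : ℕ) + 1) * k i)
          (fun _ _ => Nat.zero_le _) (mem_univ j)
      have h2 : (j : ℕ) + 1 ≤ ((j : ℕ) + 1) * k j :=
        Nat.le_mul_of_pos_right _ (by omega)
      omega
  rw [Fsum]
  calc ∑ k ∈ Sd r d, (Nat.multinomial univ k : ℝ) * ∏ i : Fin r, A (i : ℕ) ^ k i
      = ∑ k ∈ Sd r d, ∑ j : Fin r, (if k j = 0 then (0 : ℝ)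
          else (Nat.multinomial univ (Function.update k j (k j - 1)) : ℝ))
            * ∏ i : Fin r, A (i : ℕ) ^ k i := by
        refine Finset.sum_congr rfl fun k hk => ?_
        have hk0 : ∃ i, k i ≠ 0 := by
          by_contra h
          push_neg at h
          rw [mem_Sd] at hk
          simp only [h, Nat.mul_zero, Finset.sum_const_zero] at hk
          omega
        rw [multinomial_rec k hk0, Nat.cast_sum, Finset.sum_mul]
        refine Finset.sum_congr rfl fun i _ => ?_
        split_ifs with h <;> simp
      _ = ∑ j : Fin r, ∑ k ∈ Sd r d, (if k j = 0 then (0 : ℝ)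
          else (Nat.multinomial univ (Function.update k j (k j - 1)) : ℝ)
            * ∏ i : Fin r, A (i : ℕ) ^ k i) := by
        rw [Finset.sum_comm]
        refine Finset.sum_congr rfl fun k _ => Finset.sum_congr rfl fun j _ => ?_
        split_ifs with h <;> simp
      _ = ∑ j : Fin r, ∑ k ∈ (Sd r d).filter (fun k => ¬ k j = 0),
          (Nat.multinomial univ (Function.update k j (k j - 1)) : ℝ)
            * ∏ i : Fin r, A (i : ℕ) ^ k i := by
        refine Finset.sum_congr rfl fun j _ => ?_
        rw [Finset.sum_filter]
        refine Finset.sum_congr rfl fun k _ => ?_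
        rw [ite_not]
      _ = ∑ j : Fin r, A (j : ℕ) * rho r A (m - (j : ℕ)) :=
        Finset.sum_congr rfl fun j _ => key j

set_option synthInstance.maxHeartbeats 1000000 in
set_option maxHeartbeats 1000000 in
/-- Combinatorial formula for the powers of an algebraic bounded operator `T` satisfying
`T^r = c_{r-1} T^{r-1} + ⋯ + c₁ T + c₀ I` with real coefficients, where `a_j := c_{r-1-j}`:
for every `n ≥ r`, `Tⁿ = Σ_{s=0}^{r-1} ρ(n−s, r; a) W_s` with
`W_s = Σ_{j=s}^{r-1} a_j T^{s+r-1-j}`. -/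
theorem algebraic_operator_power_combinatorial_formula
    {H : Type*} [NormedAddCommGroup H] [InnerProductSpace ℂ H] [CompleteSpace H]
    {r : ℕ} (hr : 2 ≤ r) (c : ℕ → ℝ) (T : H →L[ℂ] H)
    (hT : T ^ r = ∑ j ∈ Finset.range r, ((c j : ℝ) : ℂ) • T ^ j)
    (a : ℕ → ℝ) (ha : ∀ j, a j = c (r - 1 - j)) :
    ∀ n : ℕ, r ≤ n →
      T ^ n = ∑ s ∈ Finset.range r, rho r a (n - s) •
        (∑ j ∈ Finset.Icc s (r - 1), a j • T ^ (s + (r - 1 - j))) := by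
  obtain ⟨q, rfl⟩ : ∃ q, r = q + 1 := ⟨r - 1, by omega⟩
  simp only [Nat.add_sub_cancel]
  set W : ℕ → (H →L[ℂ] H) := fun s => ∑ j ∈ Finset.Icc s q, a j • T ^ (s + (q - j)) with hW
  have hq : 1 ≤ q := by omega
  have hsmul : ∀ (x : ℝ) (S : H →L[ℂ] H), T * (x • S) = x • (T * S) := by
    intro x S
    ext v
    simp [ContinuousLinearMap.mul_apply]
  have hT' : T ^ (q + 1) = ∑ j ∈ Finset.range (q + 1), c j • T ^ j := by
    rw [hT]
    exact Finset.sum_congr rfl fun j _ => by rw [Complex.coe_smul]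
  have hW0 : T ^ (q + 1) = W 0 := by
    rw [hW]
    have hIcc : Finset.Icc 0 q = Finset.range (q + 1) := by
      ext x; simp [Nat.lt_succ_iff]
    simp only [hIcc, zero_add]
    have : ∀ j ∈ Finset.range (q + 1), a j • T ^ (q - j)
        = (fun i => c i • T ^ i) (q + 1 - 1 - j) := by
      intro j hj
      simp only [Nat.add_sub_cancel, ha j]
    rw [Finset.sum_congr rfl this, Finset.sum_range_reflect (fun i => c i • T ^ i) (q + 1), hT']
  have hWq : W (q + 1) = 0 := by
    show (∑ j ∈ Finset.Icc (q + 1) q, a j • T ^ ((q + 1) + (q - j))) = 0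
    rw [Finset.Icc_eq_empty (by omega), Finset.sum_empty]
  have hTW : ∀ s, s ≤ q → T * W s = a s • T ^ (q + 1) + W (s + 1) := by
    intro s hs
    simp only [hW]
    simp only [Finset.mul_sum]
    have h1 : ∀ j ∈ Finset.Icc s q, T * (a j • T ^ (s + (q - j)))
        = a j • T ^ ((s + 1) + (q - j)) := by
      intro j hj
      rw [hsmul, ← _root_.pow_succ', show s + (q - j) + 1 = s + 1 + (q - j) by omega]
    rw [Finset.sum_congr rfl h1]
    rw [Finset.sum_eq_sum_sdiff_singleton_add (Finset.mem_Icc.mpr ⟨le_refl s, hs⟩)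
      (fun j => a j • T ^ ((s + 1) + (q - j)))]
    have h2 : Finset.Icc s q \ {s} = Finset.Icc (s + 1) q := by
      ext x; simp [Finset.mem_Icc]; omega
    rw [h2, show s + 1 + (q - s) = q + 1 by omega]
    exact add_comm _ _
  refine Nat.le_induction ?_ ?_
  · -- base case n = q + 1
    rw [Finset.sum_eq_single_of_mem 0 (Finset.mem_range.mpr (by omega))]
    · rw [Nat.sub_zero, rho_eq_Fsum a (le_refl (q + 1)), Nat.sub_self, Fsum_zero, one_smul]
      exact hW0
    · intro s hs hs0
      rw [rho_of_lt a (by omega), zero_smul]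
  · -- inductive step
    intro n hn IH
    rw [_root_.pow_succ', IH, Finset.mul_sum]
    have step : ∀ s ∈ Finset.range (q + 1),
        T * (rho (q + 1) a (n - s) • W s)
        = rho (q + 1) a (n - s) • (a s • T ^ (q + 1)) + rho (q + 1) a (n - s) • W (s + 1) := by
      intro s hs
      rw [hsmul, hTW s (by simp at hs; omega), smul_add]
    rw [Finset.sum_congr rfl step, Finset.sum_add_distrib]
    have part1 : (∑ s ∈ Finset.range (q + 1), rho (q + 1) a (n - s) • (a s • T ^ (q + 1)))
        = rho (q + 1) a (n + 1) • W 0 := by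
      have : ∀ s ∈ Finset.range (q + 1), rho (q + 1) a (n - s) • (a s • T ^ (q + 1))
          = (a s * rho (q + 1) a (n - s)) • T ^ (q + 1) := by
        intro s _
        rw [smul_smul, mul_comm]
      rw [Finset.sum_congr rfl this, ← Finset.sum_smul, ← rho_succ a (by omega) hn, hW0]
    have part2 : (∑ s ∈ Finset.range (q + 1), rho (q + 1) a (n - s) • W (s + 1))
        = ∑ s ∈ Finset.range q, rho (q + 1) a (n - s) • W (s + 1) := by
      rw [Finset.sum_range_succ, hWq, smul_zero, add_zero]
    rw [part1, part2]
    rw [Finset.sum_range_succ' (fun s => rho (q + 1) a (n + 1 - s) • W s) q]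
    simp only [Nat.succ_sub_succ, Nat.sub_zero]
    exact add_comm _ _
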